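/- arXiv:1508.04709 — 2 statements merged into one kernel-verified Lean document; each statement's English description precedes it below -/
import Mathlib

section
/- Both eigenvalues of the Hessian of G₁ at any nonzero m ∈ ℝ² are strictly less than 2α₁(q−p)/(pq). In particular, for any χ₁ ≥ 2α₁(q−p)/(pq), the function m ↦ G₁(m) − (χ₁/2)|m|² is concave on ℝ². -/
/-!
The Hessian has the form `a I + b m ⊗ m` with `b ≥ 0`, so its eigenvalues are at most
`a + b |m|²`, which is the second derivative `g''(|m|)` of the radial profile
`g(t) = α₁ (p ln(p + t) - q ln(q + t))`. One computes
`g''(t) = α₁ (q - p)(t² - pq) / ((p + t)² (q + t)²)`, and since `(p + t)(q + t)` dominates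
both `t²` and `pq` this is `< α₁ (q - p) / (pq)`.
For the concavity, `m ↦ G₁(m) - χ₁/2 |m|²` is `h(|m|)` with `h(t) = g(t) - χ₁ t² / 2`; on
`[0, ∞)` we have `h'' ≤ 0` and `h' ≤ 0`, and a concave nonincreasing function of the convex
function `|·|` is concave.
-/

open Matrix Set

theorem dotProduct_sq_le_dotProduct_self_mul {n : Type*} [Fintype n] (u v : n → ℝ) :
    (u ⬝ᵥ v) ^ 2 ≤ (u ⬝ᵥ u) * (v ⬝ᵥ v) := by
  simpa only [dotProduct, sq] using Finset.sum_mul_sq_le_sq_mul_sq Finset.univ u v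

theorem eigenvalue_smul_one_add_smul_vecMulVec_le {n : Type*} [Fintype n] [DecidableEq n]
    {a b μ : ℝ} (hb : 0 ≤ b) (u : n → ℝ) {v : n → ℝ} (hv : v ≠ 0)
    (h : (a • (1 : Matrix n n ℝ) + b • vecMulVec u u) *ᵥ v = μ • v) :
    μ ≤ a + b * (u ⬝ᵥ u) := by
  have hquad : μ * (v ⬝ᵥ v) = a * (v ⬝ᵥ v) + b * (u ⬝ᵥ v) ^ 2 := by
    have hdot := congrArg (v ⬝ᵥ ·) h
    simp only [add_mulVec, smul_mulVec, one_mulVec, vecMulVec_mulVec, op_smul_eq_smul,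
      dotProduct_add, dotProduct_smul, smul_eq_mul, dotProduct_comm v u] at hdot
    linear_combination -hdot
  have hv2 : 0 < v ⬝ᵥ v := by
    simpa using dotProduct_star_self_pos_iff.2 hv
  refine le_of_mul_le_mul_right ?_ hv2
  nlinarith [mul_le_mul_of_nonneg_left (dotProduct_sq_le_dotProduct_self_mul u v) hb]

theorem ConcaveOn.comp_norm_of_antitoneOn {E : Type*} [SeminormedAddCommGroup E]
    [NormedSpace ℝ E] {g : ℝ → ℝ} (hg : ConcaveOn ℝ (Ici 0) g) (hg' : AntitoneOn g (Ici 0)) :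
    ConcaveOn ℝ univ (fun x : E => g ‖x‖) := by
  refine ⟨convex_univ, fun x _ y _ a b ha hb hab => ?_⟩
  calc a • g ‖x‖ + b • g ‖y‖ ≤ g (a • ‖x‖ + b • ‖y‖) :=
        hg.2 (norm_nonneg x) (norm_nonneg y) ha hb hab
    _ ≤ g ‖a • x + b • y‖ :=
        hg' (norm_nonneg _) (mem_Ici.2 (by simp only [smul_eq_mul]; positivity))
          ((convexOn_norm convex_univ).2 trivial trivial ha hb hab)

/-- The radial profile of `G₁`: `G₁(m) = logProfile α₁ p q ‖m‖`. -/
noncomputable def logProfile (α p q t : ℝ) : ℝ :=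
  α * (p * Real.log (p + t) - q * Real.log (q + t))

section LogProfile

variable {α p q χ t : ℝ}

theorem hasDerivAt_logProfile (hpt : p + t ≠ 0) (hqt : q + t ≠ 0) :
    HasDerivAt (logProfile α p q) (α * (p / (p + t) - q / (q + t))) t := by
  have hlog (c : ℝ) (hct : c + t ≠ 0) :
      HasDerivAt (fun s => Real.log (c + s)) (1 / (c + t)) t :=
    ((hasDerivAt_id' t).const_add c).log hct
  exact ((((hlog p hpt).const_mul p).sub ((hlog q hqt).const_mul q)).const_mul α).congr_deriv
    (by ring)

theorem hasDerivAt_logProfile_deriv (hpt : p + t ≠ 0) (hqt : q + t ≠ 0) :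
    HasDerivAt (fun s => α * (p / (p + s) - q / (q + s)))
      (α * (q / (q + t) ^ 2 - p / (p + t) ^ 2)) t := by
  have hdiv (c : ℝ) (hct : c + t ≠ 0) :
      HasDerivAt (fun s => c / (c + s)) (-(c / (c + t) ^ 2)) t :=
    ((hasDerivAt_const t c).div ((hasDerivAt_id' t).const_add c) hct).congr_deriv (by ring)
  exact (((hdiv p hpt).sub (hdiv q hqt)).const_mul α).congr_deriv (by ring)

theorem hasDerivAt_logProfile_sub_sq (hpt : p + t ≠ 0) (hqt : q + t ≠ 0) :
    HasDerivAt (fun s => logProfile α p q s - χ / 2 * s ^ 2)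
      (α * (p / (p + t) - q / (q + t)) - χ * t) t :=
  (hasDerivAt_logProfile hpt hqt).sub
    (((hasDerivAt_pow 2 t).const_mul (χ / 2)).congr_deriv (by ring))

theorem hasDerivAt_logProfile_deriv_sub (hpt : p + t ≠ 0) (hqt : q + t ≠ 0) :
    HasDerivAt (fun s => α * (p / (p + s) - q / (q + s)) - χ * s)
      (α * (q / (q + t) ^ 2 - p / (p + t) ^ 2) - χ) t :=
  ((hasDerivAt_logProfile_deriv hpt hqt).sub ((hasDerivAt_id' t).const_mul χ)).congr_deriv
    (by ring)

theorem logProfile_deriv2_eq (hpt : p + t ≠ 0) (hqt : q + t ≠ 0) :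
    α * (q / (q + t) ^ 2 - p / (p + t) ^ 2) =
      α * (q - p) * (t ^ 2 - p * q) / ((p + t) ^ 2 * (q + t) ^ 2) := by
  field_simp
  ring

theorem logProfile_deriv2_lt (hα : 0 < α) (hp : 0 < p) (hpq : p < q) (ht : 0 ≤ t) :
    α * (q / (q + t) ^ 2 - p / (p + t) ^ 2) < α * (q - p) / (p * q) := by
  have hq : 0 < q := hp.trans hpq
  rw [logProfile_deriv2_eq (by positivity) (by positivity),
    div_lt_div_iff₀ (by positivity) (by positivity), mul_assoc (α * (q - p))]
  refine mul_lt_mul_of_pos_left ?_ (mul_pos hα (sub_pos.2 hpq))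
  have ht2 : t ^ 2 ≤ (p + t) * (q + t) := by
    nlinarith [mul_nonneg hp.le ht, mul_nonneg hq.le ht, mul_pos hp hq]
  have hpq2 : p * q ≤ (p + t) * (q + t) := by
    nlinarith [mul_nonneg hp.le ht, mul_nonneg hq.le ht]
  nlinarith [mul_le_mul ht2 hpq2 (mul_pos hp hq).le (by positivity),
    mul_pos (mul_pos hp hq) (mul_pos hp hq)]

theorem logProfile_deriv_nonpos (hα : 0 ≤ α) (hp : 0 < p) (hpq : p ≤ q) (ht : 0 ≤ t) :
    α * (p / (p + t) - q / (q + t)) ≤ 0 := by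
  have hq : 0 < q := hp.trans_le hpq
  refine mul_nonpos_of_nonneg_of_nonpos hα (sub_nonpos.2 ?_)
  rw [div_le_div_iff₀ (by positivity) (by positivity)]
  nlinarith [mul_le_mul_of_nonneg_right hpq ht]

theorem concaveOn_logProfile_sub_sq (hα : 0 < α) (hp : 0 < p) (hpq : p < q)
    (hχ : α * (q - p) / (p * q) ≤ χ) :
    ConcaveOn ℝ (Ici 0) (fun s => logProfile α p q s - χ / 2 * s ^ 2) := by
  have hq : 0 < q := hp.trans hpq
  have hpt {t : ℝ} (ht : 0 ≤ t) : p + t ≠ 0 := by positivity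
  have hqt {t : ℝ} (ht : 0 ≤ t) : q + t ≠ 0 := by positivity
  refine concaveOn_of_hasDerivWithinAt2_nonpos (convex_Ici 0)
    (f' := fun t => α * (p / (p + t) - q / (q + t)) - χ * t)
    (f'' := fun t => α * (q / (q + t) ^ 2 - p / (p + t) ^ 2) - χ)
    (fun t ht => (hasDerivAt_logProfile_sub_sq (hpt ht) (hqt ht)).continuousAt.continuousWithinAt)
    ?_ ?_ ?_ <;> intro t ht <;> rw [interior_Ici] at ht
  · exact (hasDerivAt_logProfile_sub_sq (hpt ht.le) (hqt ht.le)).hasDerivWithinAt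
  · exact (hasDerivAt_logProfile_deriv_sub (hpt ht.le) (hqt ht.le)).hasDerivWithinAt
  · linarith [logProfile_deriv2_lt hα hp hpq ht.le]

theorem antitoneOn_logProfile_sub_sq (hα : 0 ≤ α) (hp : 0 < p) (hpq : p ≤ q) (hχ : 0 ≤ χ) :
    AntitoneOn (fun s => logProfile α p q s - χ / 2 * s ^ 2) (Ici 0) := by
  have hq : 0 < q := hp.trans_le hpq
  have hpt {t : ℝ} (ht : 0 ≤ t) : p + t ≠ 0 := by positivity
  have hqt {t : ℝ} (ht : 0 ≤ t) : q + t ≠ 0 := by positivity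
  refine antitoneOn_of_hasDerivWithinAt_nonpos (convex_Ici 0)
    (f' := fun t => α * (p / (p + t) - q / (q + t)) - χ * t)
    (fun t ht => (hasDerivAt_logProfile_sub_sq (hpt ht) (hqt ht)).continuousAt.continuousWithinAt)
    ?_ ?_ <;> intro t ht <;> rw [interior_Ici] at ht
  · exact (hasDerivAt_logProfile_sub_sq (hpt ht.le) (hqt ht.le)).hasDerivWithinAt
  · linarith [logProfile_deriv_nonpos hα hp hpq ht.le, mul_nonneg hχ ht.le]

end LogProfile

/-- Both eigenvalues of the Hessian of G₁ at nonzero m are < 2α₁(q−p)/(pq);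
consequently, for χ₁ ≥ 2α₁(q−p)/(pq), m ↦ G₁(m) − (χ₁/2)|m|² is concave. -/
theorem stmt_4 (α₁ p q : ℝ) (hα : 0 < α₁) (hp : 0 < p) (hpq : p < q) :
    (∀ m : EuclideanSpace ℝ (Fin 2), m ≠ 0 →
      ∀ μ : ℝ, (∃ v : Fin 2 → ℝ, v ≠ 0 ∧
          ((-(α₁ * (q - p) / ((p + ‖m‖) * (q + ‖m‖)))) • (1 : Matrix (Fin 2) (Fin 2) ℝ) +
            (α₁ * (1 / (p + ‖m‖) ^ 2 - 1 / (q + ‖m‖) ^ 2) / ‖m‖) •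
              Matrix.vecMulVec (fun i => m i) (fun i => m i)).mulVec v = μ • v) →
        μ < 2 * α₁ * (q - p) / (p * q)) ∧
    (∀ χ₁ : ℝ, 2 * α₁ * (q - p) / (p * q) ≤ χ₁ →
      ConcaveOn ℝ Set.univ (fun m : EuclideanSpace ℝ (Fin 2) =>
        α₁ * (p * Real.log (p + ‖m‖) - q * Real.log (q + ‖m‖)) - χ₁ / 2 * ‖m‖ ^ 2)) := by
  have hq : 0 < q := hp.trans hpq
  have hκ : 0 < α₁ * (q - p) / (p * q) := div_pos (mul_pos hα (sub_pos.2 hpq)) (mul_pos hp hq)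
  have htwice : 2 * α₁ * (q - p) / (p * q) = 2 * (α₁ * (q - p) / (p * q)) := by ring
  refine ⟨fun m hm μ ⟨v, hv, hAv⟩ => ?_, fun χ₁ hχ => ?_⟩
  · have hr : 0 < ‖m‖ := norm_pos_iff.2 hm
    have hb : 0 ≤ α₁ * (1 / (p + ‖m‖) ^ 2 - 1 / (q + ‖m‖) ^ 2) / ‖m‖ := by
      refine div_nonneg (mul_nonneg hα.le (sub_nonneg.2 ?_)) hr.le
      gcongr
    have hmm : (fun i => m i) ⬝ᵥ (fun i => m i) = ‖m‖ ^ 2 := by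
      simp only [EuclideanSpace.real_norm_sq_eq, dotProduct, ← sq]
    calc μ ≤ _ := eigenvalue_smul_one_add_smul_vecMulVec_le hb _ hv hAv
      _ = α₁ * (q / (q + ‖m‖) ^ 2 - p / (p + ‖m‖) ^ 2) := by
        rw [hmm]
        field_simp
        ring
      _ < α₁ * (q - p) / (p * q) := logProfile_deriv2_lt hα hp hpq hr.le
      _ ≤ 2 * α₁ * (q - p) / (p * q) := by linarith
  · exact ConcaveOn.comp_norm_of_antitoneOn
      (concaveOn_logProfile_sub_sq hα hp hpq (by linarith))
      (antitoneOn_logProfile_sub_sq hα.le hp hpq.le (by linarith))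
end

section
/- For every nonzero m ∈ ℝ² and any χ₃ ≥ α₃/(q−p)², both eigenvalues of the Hessian of G₃(m) − (χ₃/2)|m|² at m are ≤ 0; i.e., the Hessian −α₃/((q−p)|m|+|m|²) I + α₃(q−p+2|m|)/((q−p)|m|+|m|²)² · (m⊗m)/|m| − χ₃ I is negative semi-definite. -/
/-!
Write `r = |m|`, `s = q - p` and `D = s r + r²`. The negated Hessian is `t I - c m mᵀ` with
`t = α₃ / D + χ₃` and `c = α₃ (s + 2r) / (D² r) ≥ 0`. By Cauchy–Schwarz such a matrix is positive
semidefinite as soon as `c |m|² ≤ t`. Here `c r² - α₃ / D = α₃ / (s + r)²` is the radial second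
derivative of `-α₃ ln (s + r)`, which is at most `α₃ / s² ≤ χ₃`.
-/

open Matrix

theorem posSemidef_smul_one_sub_smul_vecMulVec {n : Type*} [Fintype n] [DecidableEq n]
    (v : n → ℝ) {t c : ℝ} (hc : 0 ≤ c) (h : c * (v ⬝ᵥ v) ≤ t) :
    (t • (1 : Matrix n n ℝ) - c • vecMulVec v v).PosSemidef := by
  have hvv : (vecMulVec v v).IsHermitian := by
    simpa only [star_trivial] using (posSemidef_vecMulVec_self_star v).isHermitian
  refine .of_dotProduct_mulVec_nonneg ((isHermitian_one.smul (.all t)).sub (hvv.smul (.all c)))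
    fun x => ?_
  have hquad : star x ⬝ᵥ ((t • (1 : Matrix n n ℝ) - c • vecMulVec v v) *ᵥ x)
      = t * (x ⬝ᵥ x) - c * (v ⬝ᵥ x) ^ 2 := by
    simp only [sub_mulVec, smul_mulVec, one_mulVec, vecMulVec_mulVec, star_trivial,
      dotProduct_sub, dotProduct_smul, smul_eq_mul, op_smul_eq_mul, dotProduct_comm x v]
    ring
  have hcs : (v ⬝ᵥ x) ^ 2 ≤ (v ⬝ᵥ v) * (x ⬝ᵥ x) := by
    simpa only [dotProduct, sq] using Finset.sum_mul_sq_le_sq_mul_sq Finset.univ v x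
  have hx : 0 ≤ x ⬝ᵥ x := by simpa only [star_trivial] using dotProduct_self_star_nonneg x
  rw [hquad]
  nlinarith [mul_le_mul_of_nonneg_left hcs hc, mul_le_mul_of_nonneg_right h hx]

theorem EuclideanSpace.dotProduct_self_eq_norm_sq {ι : Type*} [Fintype ι]
    (x : EuclideanSpace ℝ ι) : (fun i => x i) ⬝ᵥ (fun i => x i) = ‖x‖ ^ 2 := by
  rw [← real_inner_self_eq_norm_sq, EuclideanSpace.inner_eq_star_dotProduct]
  simp

theorem log_hessian_radial_eq {a s r : ℝ} (hs : 0 < s) (hr : 0 < r) :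
    a * (s + 2 * r) / (s * r + r ^ 2) ^ 2 / r * r ^ 2 - a / (s * r + r ^ 2) = a / (s + r) ^ 2 := by
  field_simp
  ring

theorem log_hessian_radial_le {a s r : ℝ} (ha : 0 ≤ a) (hs : 0 < s) (hr : 0 < r) :
    a * (s + 2 * r) / (s * r + r ^ 2) ^ 2 / r * r ^ 2 ≤ a / (s * r + r ^ 2) + a / s ^ 2 := by
  have hle : a / (s + r) ^ 2 ≤ a / s ^ 2 := by gcongr; linarith
  linarith [log_hessian_radial_eq (a := a) hs hr]

theorem stmt_12_general (α₃ p q χ₃ : ℝ) (hα : 0 < α₃) (hpq : p < q)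
    (hχ : α₃ / (q - p) ^ 2 ≤ χ₃) :
    ∀ m : EuclideanSpace ℝ (Fin 2), m ≠ 0 →
      Matrix.PosSemidef
        (-((-(α₃ / ((q - p) * ‖m‖ + ‖m‖ ^ 2))) • (1 : Matrix (Fin 2) (Fin 2) ℝ) +
            (α₃ * (q - p + 2 * ‖m‖) / ((q - p) * ‖m‖ + ‖m‖ ^ 2) ^ 2 / ‖m‖) •
              Matrix.vecMulVec (fun i => m i) (fun i => m i) -
            χ₃ • (1 : Matrix (Fin 2) (Fin 2) ℝ))) := by
  intro m hm
  have hr : 0 < ‖m‖ := norm_pos_iff.mpr hm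
  have hs : 0 < q - p := sub_pos.mpr hpq
  convert posSemidef_smul_one_sub_smul_vecMulVec (fun i => m i)
    (t := α₃ / ((q - p) * ‖m‖ + ‖m‖ ^ 2) + χ₃)
    (c := α₃ * (q - p + 2 * ‖m‖) / ((q - p) * ‖m‖ + ‖m‖ ^ 2) ^ 2 / ‖m‖) (by positivity) ?_ using 1
  · module
  · rw [EuclideanSpace.dotProduct_self_eq_norm_sq]
    linarith [log_hessian_radial_le hα.le hs hr]

/-- For nonzero m and χ₃ ≥ α₃/(q−p)², the Hessian of G₃(m) − (χ₃/2)|m|², namely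
H = −α₃/((q−p)|m|+|m|²) I + α₃(q−p+2|m|)/((q−p)|m|+|m|²)² (m⊗m)/|m| − χ₃ I,
is negative semi-definite, i.e. −H is positive semi-definite (equivalently, both
eigenvalues of H are ≤ 0). -/
theorem stmt_12 (α₃ p q χ₃ : ℝ) (hα : 0 < α₃) (hp : 0 < p) (hpq : p < q)
    (hχ : α₃ / (q - p) ^ 2 ≤ χ₃) :
    ∀ m : EuclideanSpace ℝ (Fin 2), m ≠ 0 →
      Matrix.PosSemidef
        (-((-(α₃ / ((q - p) * ‖m‖ + ‖m‖ ^ 2))) • (1 : Matrix (Fin 2) (Fin 2) ℝ) +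
            (α₃ * (q - p + 2 * ‖m‖) / ((q - p) * ‖m‖ + ‖m‖ ^ 2) ^ 2 / ‖m‖) •
              Matrix.vecMulVec (fun i => m i) (fun i => m i) -
            χ₃ • (1 : Matrix (Fin 2) (Fin 2) ℝ))) :=
  stmt_12_general α₃ p q χ₃ hα hpq hχ
end
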